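/- arXiv:2508.14477 — 2 statements merged into one kernel-verified Lean document; each statement's English description precedes it below -/
import Mathlib

section
/- Fix τ > 0, κ ∈ (0,1], P_D > 0, P_C > 0, and suppose η_D = η_C = 1. Then the set {(e₀, e₁, p) ∈ ℝ³ : e₁ = κ·e₀ − max(p,0)·τ − min(p,0)·τ and −P_C ≤ p ≤ P_D} equals {(e₀, e₁, p) ∈ ℝ³ : ∃ p_D, p_C, p = p_D − p_C, 0 ≤ p_D ≤ P_D, 0 ≤ p_C ≤ P_C, e₁ = κ·e₀ − p_D·τ + p_C·τ}. That is, for an ideal energy storage system the complementarity constraint p_D·p_C = 0 is redundant. -/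
/-- for an ideal ESS (η_D = η_C = 1) the complementarity
constraint is redundant. -/
theorem stmt2 (τ κ PD PC : ℝ) (hτ : 0 < τ)
    (hκ : κ ∈ Set.Ioc (0 : ℝ) 1) (hPD : 0 < PD) (hPC : 0 < PC) :
    {x : ℝ × ℝ × ℝ |
        x.2.1 = κ * x.1 - max x.2.2 0 * τ - min x.2.2 0 * τ ∧
        -PC ≤ x.2.2 ∧ x.2.2 ≤ PD} =
    {x : ℝ × ℝ × ℝ | ∃ pD pC : ℝ,
        x.2.2 = pD - pC ∧
        0 ≤ pD ∧ pD ≤ PD ∧ 0 ≤ pC ∧ pC ≤ PC ∧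
        x.2.1 = κ * x.1 - pD * τ + pC * τ} := by
  ext ⟨e0, e1, p⟩
  simp only [Set.mem_setOf_eq]
  constructor
  · rintro ⟨he, h1, h2⟩
    refine ⟨max p 0, max (-p) 0, ?_, le_max_right _ _, ?_, le_max_right _ _, ?_, ?_⟩
    · rcases le_total p 0 with h | h <;>
        [rw [max_eq_right h, max_eq_left (neg_nonneg.mpr h)];
         rw [max_eq_left h, max_eq_right (neg_nonpos.mpr h)]] <;> ring
    · exact max_le h2 hPD.le
    · exact max_le (neg_le.mpr h1) hPC.le
    · rw [he]
      rcases le_total p 0 with h | h <;>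
        [rw [max_eq_right h, min_eq_left h, max_eq_left (neg_nonneg.mpr h)];
         rw [max_eq_left h, min_eq_right h, max_eq_right (neg_nonpos.mpr h)]] <;> ring
  · rintro ⟨pD, pC, hp, h1, h2, h3, h4, he⟩
    refine ⟨?_, ?_, ?_⟩
    · have h := max_add_min p 0
      simp only [add_zero] at h
      nlinarith [h]
    · linarith
    · linarith
end

section
/- Consider the one-period relaxed ESS model without the complementarity constraint: e₁ = 1 − p_D/0.9 + p_C·0.9 with 0 ≤ p_D ≤ 1, 0 ≤ p_C ≤ 1, 0 ≤ e₁ ≤ 1, and p^A = −p_D + p_C. Then the set of achievable values of p^A equals the interval [−0.9, 0.19]. In particular, p^A = 0.19 is achievable (by p_D = 0.81, p_C = 1), showing the relaxation strictly enlarges the achievable set compared to the complementarity-respecting model whose achievable set is [−0.9, 0]. -/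
/-- one-period relaxed ESS model (no complementarity): the
achievable aggregate powers form [-0.9, 0.19]; in particular 0.19 is achieved
by p_D = 0.81, p_C = 1, strictly enlarging the exact set [-0.9, 0]. -/
theorem stmt7 :
    {pA : ℝ | ∃ pD pC e₁ : ℝ,
        e₁ = 1 - pD / 0.9 + pC * 0.9 ∧
        0 ≤ pD ∧ pD ≤ 1 ∧ 0 ≤ pC ∧ pC ≤ 1 ∧ 0 ≤ e₁ ∧ e₁ ≤ 1 ∧
        pA = -pD + pC} =
    Set.Icc (-0.9 : ℝ) 0.19 ∧
    (∃ e₁ : ℝ, e₁ = 1 - 0.81 / 0.9 + 1 * 0.9 ∧ 0 ≤ e₁ ∧ e₁ ≤ 1 ∧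
      (0.19 : ℝ) = -0.81 + 1) ∧
    (0.19 : ℝ) ∉ Set.Icc (-0.9 : ℝ) 0 := by
  refine ⟨?_, ⟨1 - 0.81 / 0.9 + 1 * 0.9, rfl, by norm_num, by norm_num, by norm_num⟩,
    by simp [Set.mem_Icc]; norm_num⟩
  ext pA
  simp only [Set.mem_setOf_eq, Set.mem_Icc]
  constructor
  · rintro ⟨pD, pC, e₁, he, h1, h2, h3, h4, h5, h6, h7⟩
    have hd : pD / 0.9 = pD * (10/9) := by ring
    rw [hd] at he
    constructor <;> nlinarith
  · rintro ⟨hl, hr⟩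
    rcases le_or_gt pA 0 with h | h
    · have hd : 1 + pA / 0.9 = 1 + pA * (10/9) := by ring
      exact ⟨-pA, 0, 1 + pA / 0.9, by ring, by linarith, by linarith, le_refl 0,
        by norm_num, by rw [hd]; nlinarith, by rw [hd]; nlinarith, by ring⟩
    · have hd : 1 - (1 - pA) / 0.9 + 1 * 0.9 = 1 - (1 - pA) * (10/9) + 0.9 := by ring
      exact ⟨1 - pA, 1, 1 - (1 - pA) / 0.9 + 1 * 0.9, rfl, by linarith, by linarith,
        by norm_num, le_refl 1, by rw [hd]; nlinarith, by rw [hd]; nlinarith, by ring⟩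
end
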